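/- The binary MacWilliams identity: for a k-dimensional binary linear code C of length n and real (or complex) x, y, Σ_{u ∈ C^⊥} x^{n − wt(u)} y^{wt(u)} = (1/2^k) Σ_{u ∈ C} (x+y)^{n − wt(u)} (x−y)^{wt(u)}. -/

import Mathlib

open scoped Classical

/-- The dual code of a binary linear code `C ⊆ GF(2)^n`. -/
def dualCode {n : ℕ} (C : Submodule (ZMod 2) (Fin n → ZMod 2)) :
    Submodule (ZMod 2) (Fin n → ZMod 2) where
  carrier := {a | ∀ c ∈ C, ∑ i, a i * c i = 0}
  add_mem' := by
    intro a b ha hb c hc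
    simp only [Set.mem_setOf_eq] at *
    simp [add_mul, Finset.sum_add_distrib, ha c hc, hb c hc]
  zero_mem' := by simp
  smul_mem' := by
    intro r a ha c hc
    simp only [Set.mem_setOf_eq] at *
    simp [smul_eq_mul, mul_assoc, ← Finset.mul_sum, ha c hc]

/-- The finset of codewords of a binary linear code. -/
noncomputable def codewords {n : ℕ} (C : Submodule (ZMod 2) (Fin n → ZMod 2)) :
    Finset (Fin n → ZMod 2) :=
  Finset.univ.filter (fun c => c ∈ C)

/-- `A w`: the number of codewords of Hamming weight `w`. -/
noncomputable def weightDist {n : ℕ} (C : Submodule (ZMod 2) (Fin n → ZMod 2)) (w : ℕ) : ℕ :=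
  (Finset.univ.filter (fun c => c ∈ C ∧ hammingNorm c = w)).card

/-! Write `c 0 = x`, `c 1 = y`; then `∑ a, (-1)^(a b) c a` is `x + y` for `b = 0` and `x - y`
for `b = 1`. Multiplying this out over the coordinates of `v` gives the Hadamard transform
`(x + y)^(n - wt v) (x - y)^(wt v) = ∑ u, (-1)^(u ⬝ᵥ v) x^(n - wt u) y^(wt u)`. Summing over
`v ∈ C` and exchanging the sums, `v ↦ (-1)^(u ⬝ᵥ v)` is a character of `C`, trivial exactly when
`u ∈ C^⊥`, so by orthogonality it sums to `|C| = 2^k` on `C^⊥` and to `0` off it. -/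

open Finset Matrix

lemma AddChar.map_sum_eq_prod {ι A M : Type*} [AddCommMonoid A] [CommMonoid M]
    (ψ : AddChar A M) (s : Finset ι) (f : ι → A) :
    ψ (∑ i ∈ s, f i) = ∏ i ∈ s, ψ (f i) := by
  induction s using Finset.induction_on with
  | empty => simp
  | insert a s ha ih => rw [sum_insert ha, prod_insert ha, AddChar.map_add_eq_mul, ih]

lemma prod_ite_eq_zero_eq_pow_mul_pow {ι β M : Type*} [Fintype ι] [Zero β] [DecidableEq β]
    [CommMonoid M] (u : ι → β) (x y : M) :
    ∏ i, (if u i = 0 then x else y) = x ^ (Fintype.card ι - hammingNorm u) * y ^ hammingNorm u := by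
  rw [prod_ite, prod_const, prod_const, hammingNorm, filter_not,
    card_sdiff_of_subset (filter_subset _ _), card_univ, Nat.sub_sub_self (card_le_univ _)]

lemma ZMod.eq_zero_or_eq_one_of_two (a : ZMod 2) : a = 0 ∨ a = 1 := by
  revert a; decide

noncomputable def signChar : AddChar (ZMod 2) ℝ :=
  AddChar.zmodChar 2 (by norm_num : (-1 : ℝ) ^ 2 = 1)

lemma signChar_one : signChar 1 = -1 := by
  simp [signChar, AddChar.zmodChar_apply, ZMod.val_one'' (by decide : 2 ≠ 1)]

lemma signChar_eq_one_iff {a : ZMod 2} : signChar a = 1 ↔ a = 0 := by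
  rcases a.eq_zero_or_eq_one_of_two with rfl | rfl <;> norm_num [signChar_one]

lemma sum_signChar_mul_mul_ite (b : ZMod 2) (x y : ℝ) :
    ∑ a, signChar (a * b) * (if a = 0 then x else y) = if b = 0 then x + y else x - y := by
  rw [show (univ : Finset (ZMod 2)) = {0, 1} from rfl, sum_pair zero_ne_one]
  rcases b.eq_zero_or_eq_one_of_two with rfl | rfl
  · simp
  · simp only [mul_one, AddChar.map_zero_eq_one, one_mul, signChar_one, one_ne_zero, ↓reduceIte,
      neg_mul]
    ring

lemma pow_mul_pow_eq_sum_signChar_dotProduct {ι : Type*} [Fintype ι] [DecidableEq ι]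
    (v : ι → ZMod 2) (x y : ℝ) :
    (x + y) ^ (Fintype.card ι - hammingNorm v) * (x - y) ^ hammingNorm v
      = ∑ u : ι → ZMod 2,
          signChar (u ⬝ᵥ v) * (x ^ (Fintype.card ι - hammingNorm u) * y ^ hammingNorm u) := by
  calc (x + y) ^ (Fintype.card ι - hammingNorm v) * (x - y) ^ hammingNorm v
      = ∏ i, ∑ a, signChar (a * v i) * (if a = 0 then x else y) := by
        simp only [sum_signChar_mul_mul_ite, prod_ite_eq_zero_eq_pow_mul_pow]
    _ = ∑ u : ι → ZMod 2, ∏ i, signChar (u i * v i) * (if u i = 0 then x else y) :=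
        Fintype.prod_sum _
    _ = _ := by
        simp only [prod_mul_distrib, dotProduct, ← AddChar.map_sum_eq_prod,
          prod_ite_eq_zero_eq_pow_mul_pow]

lemma mem_dualCode_iff {n : ℕ} {C : Submodule (ZMod 2) (Fin n → ZMod 2)} {u : Fin n → ZMod 2} :
    u ∈ dualCode C ↔ ∀ c ∈ C, u ⬝ᵥ c = 0 :=
  Iff.rfl

lemma sum_codewords_signChar_dotProduct {n : ℕ} (C : Submodule (ZMod 2) (Fin n → ZMod 2))
    (u : Fin n → ZMod 2) :
    ∑ v ∈ codewords C, signChar (u ⬝ᵥ v) = if u ∈ dualCode C then (#(codewords C) : ℝ) else 0 := by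
  let ψ : AddChar C ℝ := signChar.compAddMonoidHom
    ((dotProductEquiv (ZMod 2) (Fin n) u).toAddMonoidHom.comp C.subtype.toAddMonoidHom)
  have hψ : ψ = 0 ↔ u ∈ dualCode C := by
    simp [ψ, AddChar.eq_zero_iff, mem_dualCode_iff, signChar_eq_one_iff]
  have hcard : Fintype.card C = #(codewords C) := Fintype.card_subtype _
  calc ∑ v ∈ codewords C, signChar (u ⬝ᵥ v) = ∑ c, ψ c :=
        sum_subtype _ (fun _ => by simp [codewords]) _
    _ = _ := by rw [AddChar.sum_eq_ite, hcard]; exact if_congr hψ rfl rfl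

lemma card_codewords {n : ℕ} (C : Submodule (ZMod 2) (Fin n → ZMod 2)) :
    #(codewords C) = 2 ^ Module.finrank (ZMod 2) C := by
  rw [codewords, ← Fintype.card_subtype, Module.card_eq_pow_finrank (K := ZMod 2), ZMod.card]

lemma sum_codewords_sum_signChar_dotProduct_mul {n : ℕ} (C : Submodule (ZMod 2) (Fin n → ZMod 2))
    (f : (Fin n → ZMod 2) → ℝ) :
    ∑ v ∈ codewords C, ∑ u, signChar (u ⬝ᵥ v) * f u
      = #(codewords C) * ∑ u ∈ codewords (dualCode C), f u := by
  rw [sum_comm, mul_sum]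
  simp only [← sum_mul, sum_codewords_signChar_dotProduct, ite_mul, zero_mul]
  exact (sum_filter _ _).symm

theorem macwilliams_identity (n k : ℕ) (C : Submodule (ZMod 2) (Fin n → ZMod 2))
    (hk : Module.finrank (ZMod 2) C = k) (x y : ℝ) :
    ∑ u ∈ codewords (dualCode C), x ^ (n - hammingNorm u) * y ^ (hammingNorm u)
      = (1 / 2 ^ k : ℝ) *
          ∑ u ∈ codewords C, (x + y) ^ (n - hammingNorm u) * (x - y) ^ (hammingNorm u) := by
  have hcard : (#(codewords C) : ℝ) = 2 ^ k := by
    rw [card_codewords, hk]; norm_num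
  have htransform (v : Fin n → ZMod 2) :
      (x + y) ^ (n - hammingNorm v) * (x - y) ^ hammingNorm v
        = ∑ u, signChar (u ⬝ᵥ v) * (x ^ (n - hammingNorm u) * y ^ hammingNorm u) := by
    simpa only [Fintype.card_fin] using pow_mul_pow_eq_sum_signChar_dotProduct v x y
  rw [sum_congr rfl fun v _ => htransform v, sum_codewords_sum_signChar_dotProduct_mul, hcard]
  field_simp
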